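/- (Cauchy–Schwarz kinetic energy lower bound) Let $\varrho \in \mathcal E^+$ with spectral elements $(\rho_p, \phi_p)$, local density $n[\varrho] = \sum_p \rho_p |\phi_p|^2$, and kinetic energy $E(\varrho) = \frac{1}{2}\sum_p \rho_p \|\nabla\phi_p\|_{L^2}^2$. Then $\frac{1}{2}\|\nabla\sqrt{n[\varrho]}\|_{L^2}^2 \le E(\varrho)$. -/

import Mathlib

/-!
Write `S = ∑ ρ_p |φ_p'|²`. Since `√n(x)` is the `ℓ²` norm of `(√ρ_p φ_p(x))_p`, the reverse
triangle inequality in `ℓ²` followed by the fundamental theorem of calculus and Cauchy–Schwarz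
for each `p` gives `(√n(y) - √n(x))² ≤ ∑ ρ_p |φ_p(y) - φ_p(x)|² ≤ (y - x) ∫_x^y S`. Dividing by
`(y - x)²` and letting `y ↓ x` yields `((√n)'(x))² ≤ S(x)` at every Lebesgue point of `S`, and
integrating over `[0, 1]` gives the bound, without ever differentiating the series for `n`
term by term.
-/

open MeasureTheory Set Filter Topology

lemma sq_intervalIntegral_le {g : ℝ → ℝ} {a b : ℝ} (hab : a ≤ b)
    (hg : IntervalIntegrable g volume a b)
    (hg2 : IntervalIntegrable (fun t => g t ^ 2) volume a b) :
    (∫ t in a..b, g t) ^ 2 ≤ (b - a) * ∫ t in a..b, g t ^ 2 := by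
  rcases hab.eq_or_lt with rfl | hlt
  · simp
  have hjensen : (⨍ t in a..b, g t) ^ 2 ≤ ⨍ t in a..b, g t ^ 2 :=
    (even_two.convexOn_pow).map_set_average_le (continuous_pow 2).continuousOn isClosed_univ
      (by simp [uIoc_of_le hab, hlt]) (by simp [uIoc_of_le hab])
      (ae_of_all _ fun _ => mem_univ _) hg.def' hg2.def'
  rw [interval_average_eq_div, interval_average_eq_div, div_pow,
    div_le_div_iff₀ (by positivity) (by linarith)] at hjensen
  nlinarith [sub_pos.2 hlt]

lemma sq_sqrt_tsum_sub_sqrt_tsum_le {ι E : Type*} [NormedAddCommGroup E] {u v : ι → E}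
    (h : Summable fun i => ‖u i - v i‖ ^ 2) :
    (√(∑' i, ‖u i‖ ^ 2) - √(∑' i, ‖v i‖ ^ 2)) ^ 2 ≤ ∑' i, ‖u i - v i‖ ^ 2 := by
  have memℓp_iff {w : ι → E} : Memℓp w 2 ↔ Summable fun i => ‖w i‖ ^ 2 := by
    simpa using memℓp_gen_iff (p := 2) (f := w) (by norm_num)
  have hd : Memℓp (u - v) 2 := memℓp_iff.2 h
  by_cases hu : Memℓp u 2
  · have hv : Memℓp v 2 := by simpa using hu.sub hd
    let U : lp (fun _ : ι => E) 2 := ⟨u, hu⟩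
    let V : lp (fun _ : ι => E) 2 := ⟨v, hv⟩
    have hnorm (W : lp (fun _ : ι => E) 2) : ‖W‖ = √(∑' i, ‖W i‖ ^ 2) := by
      rw [← Real.sqrt_sq (norm_nonneg W)]
      simpa using congrArg Real.sqrt (lp.norm_rpow_eq_tsum (p := 2) (by norm_num) W)
    have htri := abs_norm_sub_norm_le U V
    rw [hnorm U, hnorm V, hnorm (U - V)] at htri
    calc _ ≤ √(∑' i, ‖(U - V) i‖ ^ 2) ^ 2 := sq_le_sq' (abs_le.1 htri).1 (abs_le.1 htri).2
      _ = ∑' i, ‖u i - v i‖ ^ 2 := Real.sq_sqrt (tsum_nonneg fun _ => by positivity)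
  -- Both series diverge, so both `tsum`s take the junk value `0`.
  · have hv : ¬ Memℓp v 2 := fun hv => hu (by simpa using hv.add hd)
    rw [memℓp_iff] at hu hv
    rw [tsum_eq_zero_of_not_summable hu, tsum_eq_zero_of_not_summable hv]
    simpa using tsum_nonneg fun i => sq_nonneg ‖u i - v i‖

lemma norm_sub_sq_le_mul_integral_norm_deriv_sq {E : Type*} [NormedAddCommGroup E]
    [NormedSpace ℝ E] [CompleteSpace E] {F F' : ℝ → E} {a b : ℝ} (hab : a ≤ b)
    (hF : ∀ t ∈ Icc a b, HasDerivAt F (F' t) t)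
    (hF' : IntervalIntegrable (fun t => ‖F' t‖ ^ 2) volume a b) :
    ‖F b - F a‖ ^ 2 ≤ (b - a) * ∫ t in a..b, ‖F' t‖ ^ 2 := by
  have hmeas : AEStronglyMeasurable F' (volume.restrict (Ioc a b)) := by
    refine (aestronglyMeasurable_deriv F _).congr ?_
    filter_upwards [ae_restrict_mem measurableSet_Ioc] with t ht
    exact (hF t (Ioc_subset_Icc_self ht)).deriv
  have hint : IntervalIntegrable F' volume a b :=
    (intervalIntegrable_iff_integrableOn_Ioc_of_le hab).2 <|
      ((memLp_two_iff_integrable_sq_norm hmeas).2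
        ((intervalIntegrable_iff_integrableOn_Ioc_of_le hab).1 hF')).integrable one_le_two
  have hftc : ∫ t in a..b, F' t = F b - F a :=
    intervalIntegral.integral_eq_sub_of_hasDerivAt (fun t ht => hF t (uIcc_of_le hab ▸ ht)) hint
  calc ‖F b - F a‖ ^ 2 ≤ (∫ t in a..b, ‖F' t‖) ^ 2 := by
        rw [← hftc]
        gcongr
        exact intervalIntegral.norm_integral_le_integral_norm hab
    _ ≤ (b - a) * ∫ t in a..b, ‖F' t‖ ^ 2 := sq_intervalIntegral_le hab hint.norm hF'

lemma sq_le_of_hasDerivAt_of_sq_sub_le {f F : ℝ → ℝ} {f' F' x : ℝ} (hf : HasDerivAt f f' x)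
    (hF : HasDerivAt F F' x)
    (hinc : ∀ᶠ y in 𝓝[>] x, (f y - f x) ^ 2 ≤ (y - x) * (F y - F x)) : f' ^ 2 ≤ F' := by
  have hslope (g : ℝ → ℝ) (g' : ℝ) (hg : HasDerivAt g g' x) :
      Tendsto (slope g x) (𝓝[>] x) (𝓝 g') :=
    (hasDerivAt_iff_tendsto_slope_left_right.1 hg).2
  refine le_of_tendsto_of_tendsto ((hslope f f' hf).pow 2) (hslope F F' hF) ?_
  filter_upwards [hinc, self_mem_nhdsWithin] with y hy (hxy : x < y)
  rw [slope_def_field, slope_def_field, div_pow, div_le_div_iff₀ (by nlinarith) (by linarith)]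
  nlinarith [sub_pos.2 hxy]

lemma integral_sq_deriv_le_of_sq_sub_le {f f' S : ℝ → ℝ} {a b : ℝ} (hab : a ≤ b)
    (hf : ∀ x ∈ Ioo a b, HasDerivAt f (f' x) x) (hS : IntervalIntegrable S volume a b)
    (hinc : ∀ x y, a ≤ x → x ≤ y → y ≤ b → (f y - f x) ^ 2 ≤ (y - x) * ∫ t in x..y, S t) :
    ∫ x in a..b, f' x ^ 2 ≤ ∫ x in a..b, S x := by
  have hpointwise : ∀ᵐ x, x ∈ Ioo a b → f' x ^ 2 ≤ S x := by
    filter_upwards [hS.ae_hasDerivAt_integral] with x hS' hx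
    have hmem {z : ℝ} (hz : z ∈ Icc a b) : z ∈ uIcc a b := uIcc_of_le hab ▸ hz
    have hax : a ∈ uIcc a b := left_mem_uIcc
    refine sq_le_of_hasDerivAt_of_sq_sub_le (hf x hx)
      (hS' (hmem (Ioo_subset_Icc_self hx)) a hax) ?_
    filter_upwards [Ioo_mem_nhdsGT hx.2] with y hy
    rw [intervalIntegral.integral_interval_sub_left]
    · exact hinc x y hx.1.le hy.1.le hy.2.le
    · exact hS.mono_set (uIcc_subset_uIcc hax (hmem ⟨hx.1.le.trans hy.1.le, hy.2.le⟩))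
    · exact hS.mono_set (uIcc_subset_uIcc hax (hmem (Ioo_subset_Icc_self hx)))
  rw [intervalIntegral.integral_of_le hab, intervalIntegral.integral_of_le hab,
    Measure.restrict_congr_set Ioo_ae_eq_Ioc.symm]
  exact integral_mono_of_nonneg (ae_of_all _ fun _ => sq_nonneg _)
    ((intervalIntegrable_iff_integrableOn_Ioo_of_le hab).1 hS)
    ((ae_restrict_iff' measurableSet_Ioo).2 hpointwise)

lemma integrable_tsum_of_summable_integral_norm {α ι : Type*} [MeasurableSpace α]
    {μ : Measure α} [Countable ι] {F : ι → α → ℝ} (hF : ∀ i, Integrable (F i) μ)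
    (hsum : Summable fun i => ∫ a, ‖F i a‖ ∂μ) : Integrable (fun a => ∑' i, F i a) μ := by
  refine ⟨(AEMeasurable.tsum fun i => (hF i).aemeasurable).aestronglyMeasurable, ?_⟩
  calc ∫⁻ a, ‖∑' i, F i a‖ₑ ∂μ ≤ ∫⁻ a, ∑' i, ‖F i a‖ₑ ∂μ :=
        lintegral_mono fun _ => enorm_tsum_le_tsum_enorm
    _ = ∑' i, ENNReal.ofReal (∫ a, ‖F i a‖ ∂μ) := by
        rw [lintegral_tsum fun i => (hF i).aemeasurable.enorm]
        simp_rw [ofReal_integral_norm_eq_lintegral_enorm (hF _)]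
    _ < ⊤ := hsum.tsum_ofReal_lt_top

section DensityMatrix

variable {ρ : ℕ → ℝ} {φ dφ : ℕ → ℝ → ℂ} {a b x y : ℝ}

lemma summable_mul_intervalIntegral_of_subinterval (hρ : ∀ p, 0 ≤ ρ p)
    (hI : ∀ p, IntervalIntegrable (fun t => ‖dφ p t‖ ^ 2) volume a b)
    (hE : Summable fun p => ρ p * ∫ t in a..b, ‖dφ p t‖ ^ 2)
    (hax : a ≤ x) (hxy : x ≤ y) (hyb : y ≤ b) :
    Summable fun p => ρ p * ∫ t in x..y, ‖dφ p t‖ ^ 2 :=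
  hE.of_nonneg_of_le
    (fun p => mul_nonneg (hρ p) (intervalIntegral.integral_nonneg hxy fun _ _ => by positivity))
    fun p => mul_le_mul_of_nonneg_left (intervalIntegral.integral_mono_interval hax hxy hyb
      (ae_of_all _ fun _ => by positivity) (hI p)) (hρ p)

lemma intervalIntegral_tsum_mul_norm_sq (hρ : ∀ p, 0 ≤ ρ p) (hxy : x ≤ y)
    (hI : ∀ p, IntervalIntegrable (fun t => ‖dφ p t‖ ^ 2) volume x y)
    (hE : Summable fun p => ρ p * ∫ t in x..y, ‖dφ p t‖ ^ 2) :
    IntervalIntegrable (fun t => ∑' p, ρ p * ‖dφ p t‖ ^ 2) volume x y ∧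
      ∫ t in x..y, ∑' p, ρ p * ‖dφ p t‖ ^ 2 = ∑' p, ρ p * ∫ t in x..y, ‖dφ p t‖ ^ 2 := by
  have hint (p : ℕ) : IntegrableOn (fun t => ρ p * ‖dφ p t‖ ^ 2) (Ioc x y) :=
    ((intervalIntegrable_iff_integrableOn_Ioc_of_le hxy).1 (hI p)).const_mul (ρ p)
  have hnorm (p : ℕ) :
      ∫ t in Ioc x y, ‖ρ p * ‖dφ p t‖ ^ 2‖ = ρ p * ∫ t in x..y, ‖dφ p t‖ ^ 2 := by
    rw [intervalIntegral.integral_of_le hxy, ← integral_const_mul]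
    exact integral_congr_ae
      (ae_of_all _ fun t => Real.norm_of_nonneg (by have := hρ p; positivity))
  have hsum : Summable fun p => ∫ t in Ioc x y, ‖ρ p * ‖dφ p t‖ ^ 2‖ := by
    simpa only [hnorm] using hE
  refine ⟨(intervalIntegrable_iff_integrableOn_Ioc_of_le hxy).2
    (integrable_tsum_of_summable_integral_norm hint hsum), ?_⟩
  rw [intervalIntegral.integral_of_le hxy, ← integral_tsum_of_summable_integral_norm hint hsum]
  refine tsum_congr fun p => ?_
  rw [integral_const_mul, intervalIntegral.integral_of_le hxy]

lemma sq_sqrt_tsum_mul_norm_sq_sub_le (hρ : ∀ p, 0 ≤ ρ p) (hxy : x ≤ y)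
    (hφ : ∀ p, ∀ t ∈ Icc x y, HasDerivAt (φ p) (dφ p t) t)
    (hI : ∀ p, IntervalIntegrable (fun t => ‖dφ p t‖ ^ 2) volume x y)
    (hE : Summable fun p => ρ p * ∫ t in x..y, ‖dφ p t‖ ^ 2) :
    (√(∑' p, ρ p * ‖φ p y‖ ^ 2) - √(∑' p, ρ p * ‖φ p x‖ ^ 2)) ^ 2
      ≤ (y - x) * ∑' p, ρ p * ∫ t in x..y, ‖dφ p t‖ ^ 2 := by
  have hweight (p : ℕ) (z : ℂ) : ρ p * ‖z‖ ^ 2 = ‖√(ρ p) • z‖ ^ 2 := by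
    rw [norm_smul, mul_pow, Real.norm_of_nonneg (Real.sqrt_nonneg _), Real.sq_sqrt (hρ p)]
  have hstep (p : ℕ) :
      ρ p * ‖φ p y - φ p x‖ ^ 2 ≤ (y - x) * (ρ p * ∫ t in x..y, ‖dφ p t‖ ^ 2) := by
    rw [mul_left_comm]
    exact mul_le_mul_of_nonneg_left
      (norm_sub_sq_le_mul_integral_norm_deriv_sq hxy (hφ p) (hI p)) (hρ p)
  have hdiff : Summable fun p => ρ p * ‖φ p y - φ p x‖ ^ 2 :=
    (hE.mul_left (y - x)).of_nonneg_of_le (fun p => by have := hρ p; positivity) hstep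
  have hdiff' : ∀ p, ρ p * ‖φ p y - φ p x‖ ^ 2 = ‖√(ρ p) • φ p y - √(ρ p) • φ p x‖ ^ 2 :=
    fun p => by rw [← smul_sub, hweight]
  have hℓ2 := sq_sqrt_tsum_sub_sqrt_tsum_le (hdiff.congr hdiff')
  simp only [← hweight, ← hdiff'] at hℓ2
  refine hℓ2.trans ?_
  rw [← tsum_mul_left]
  exact hdiff.tsum_le_tsum hstep (hE.mul_left _)

end DensityMatrix

theorem stmt8_general (ρ : ℕ → ℝ) (φ dφ : ℕ → ℝ → ℂ) (n ds : ℝ → ℝ)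
    (hρ : ∀ p, 0 ≤ ρ p)
    (hφ : ∀ p x, HasDerivAt (φ p) (dφ p x) x)
    (hn : ∀ x, n x = ∑' p, ρ p * ‖φ p x‖ ^ 2)
    (hs : ∀ x, HasDerivAt (fun y => Real.sqrt (n y)) (ds x) x)
    (hI : ∀ p, IntervalIntegrable (fun x => ‖dφ p x‖ ^ 2) volume 0 1)
    (hE : Summable (fun p => ρ p * ∫ x in (0:ℝ)..1, ‖dφ p x‖ ^ 2)) :
    (1 / 2) * ∫ x in (0:ℝ)..1, (ds x) ^ 2
      ≤ (1 / 2) * ∑' p, ρ p * ∫ x in (0:ℝ)..1, ‖dφ p x‖ ^ 2 := by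
  have hIsub (x y : ℝ) (hx : 0 ≤ x) (hxy : x ≤ y) (hy : y ≤ 1) (p : ℕ) :
      IntervalIntegrable (fun t => ‖dφ p t‖ ^ 2) volume x y :=
    (hI p).mono_set (by rw [uIcc_of_le hxy, uIcc_of_le zero_le_one]; exact Icc_subset_Icc hx hy)
  have hEsub (x y : ℝ) (hx : 0 ≤ x) (hxy : x ≤ y) (hy : y ≤ 1) :
      Summable fun p => ρ p * ∫ t in x..y, ‖dφ p t‖ ^ 2 :=
    summable_mul_intervalIntegral_of_subinterval hρ hI hE hx hxy hy
  have hS := intervalIntegral_tsum_mul_norm_sq hρ zero_le_one hI hE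
  rw [← hS.2]
  gcongr
  refine integral_sq_deriv_le_of_sq_sub_le zero_le_one (fun x _ => hs x) hS.1 ?_
  intro x y hx hxy hy
  rw [hn, hn, (intervalIntegral_tsum_mul_norm_sq hρ hxy (hIsub x y hx hxy hy)
    (hEsub x y hx hxy hy)).2]
  exact sq_sqrt_tsum_mul_norm_sq_sub_le hρ hxy (fun p t _ => hφ p t) (hIsub x y hx hxy hy)
    (hEsub x y hx hxy hy)

/-- Cauchy–Schwarz kinetic energy lower bound: for a density operator with spectral
elements `(ρ_p, φ_p)`, local density `n = ∑ ρ_p |φ_p|²` and kinetic energy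
`E = (1/2) ∑ ρ_p ‖φ_p'‖²`, one has `(1/2)‖(√n)'‖_{L²}² ≤ E`. -/
theorem stmt8 (ρ : ℕ → ℝ) (φ dφ : ℕ → ℝ → ℂ) (n ds : ℝ → ℝ)
    (hρ : ∀ p, 0 ≤ ρ p)
    (hφ : ∀ p x, HasDerivAt (φ p) (dφ p x) x)
    (hn : ∀ x, n x = ∑' p, ρ p * ‖φ p x‖ ^ 2)
    (hs : ∀ x, HasDerivAt (fun y => Real.sqrt (n y)) (ds x) x)
    (hI : ∀ p, IntervalIntegrable (fun x => ‖dφ p x‖ ^ 2) volume 0 1)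
    (hIs : IntervalIntegrable (fun x => (ds x) ^ 2) volume 0 1)
    (hE : Summable (fun p => ρ p * ∫ x in (0:ℝ)..1, ‖dφ p x‖ ^ 2)) :
    (1 / 2) * ∫ x in (0:ℝ)..1, (ds x) ^ 2
      ≤ (1 / 2) * ∑' p, ρ p * ∫ x in (0:ℝ)..1, ‖dφ p x‖ ^ 2 :=
  stmt8_general ρ φ dφ n ds hρ hφ hn hs hI hE
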